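/- For every integer n ≥ 1, the polynomial identity Σ_{u=1}^{n} [n choose u]_t · (t;t)_{u−1} = n holds in ℤ[t]. -/

import Mathlib

open scoped BigOperators

/-- A partition: a weakly decreasing, finitely supported sequence of
nonnegative integers, indexed from `0` (so `parts 0` is `λ₁`). -/
structure Ptn where
  parts : ℕ → ℕ
  antitone' : Antitone parts
  exists_zero : ∃ N, parts N = 0

namespace Ptn

/-- `|λ| = Σᵢ λᵢ`. -/
noncomputable def size (l : Ptn) : ℕ := ∑ᶠ j, l.parts j

/-- `ℓ(λ)`, the number of nonzero parts. -/
noncomputable def len (l : Ptn) : ℕ := Set.ncard {j | l.parts j ≠ 0}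

/-- `n(λ) = Σᵢ (i-1) λᵢ` (with 1-based `i`). -/
noncomputable def nstat (l : Ptn) : ℕ := ∑ᶠ j, j * l.parts j

/-- `λ'ᵢ = #{j : λⱼ ≥ i}`, the transpose partition (meaningful for `i ≥ 1`). -/
noncomputable def conj (l : Ptn) (i : ℕ) : ℕ := Set.ncard {j | i ≤ l.parts j}

/-- `mᵢ(λ) = #{j : λⱼ = i}` (meaningful for `i ≥ 1`). -/
noncomputable def mult (l : Ptn) (i : ℕ) : ℕ := Set.ncard {j | l.parts j = i}

/-- The partition `(1^n)`. -/
def onePow (n : ℕ) : Ptn where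
  parts := fun j => if j < n then 1 else 0
  antitone' := by
    intro a b hab
    simp only
    split_ifs <;> omega
  exists_zero := ⟨n, by simp⟩

/-- The one-row partition `(n)`. -/
def single (n : ℕ) : Ptn where
  parts := fun j => if j = 0 then n else 0
  antitone' := by
    intro a b hab
    simp only
    split_ifs <;> omega
  exists_zero := ⟨n + 1, by simp⟩

/-- The empty partition. -/
def empty : Ptn := onePow 0

end Ptn

/-- The q-Pochhammer symbol `(x;t)_n = ∏_{i=1}^n (1 - x t^{i-1})`. -/
def qPoch {K : Type*} [CommRing K] (x t : K) (n : ℕ) : K :=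
  ∏ i ∈ Finset.range n, (1 - x * t ^ i)

/-- The Gaussian binomial coefficient `[n choose r]_t`, zero for `r > n`. -/
noncomputable def qBinom {K : Type*} [Field K] (t : K) (n r : ℕ) : K :=
  if r ≤ n then qPoch t t n / (qPoch t t r * qPoch t t (n - r)) else 0

/-- The Gaussian binomial coefficient with integer arguments,
zero outside `0 ≤ r ≤ n`. -/
noncomputable def qBinomZ {K : Type*} [Field K] (t : K) (n r : ℤ) : K :=
  if 0 ≤ r ∧ r ≤ n then
    qPoch t t n.toNat / (qPoch t t r.toNat * qPoch t t (n - r).toNat)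
  else 0

/-- `I_λ = ⊕ᵢ k[X]/(X^{λᵢ})`, a module over `k[X]` on which `X` acts nilpotently. -/
def Imod (k : Type*) [Field k] (l : Ptn) : Type _ :=
  ∀ i : Fin l.len, Polynomial k ⧸ Ideal.span {(Polynomial.X : Polynomial k) ^ l.parts (i : ℕ)}

noncomputable instance (k : Type*) [Field k] (l : Ptn) : AddCommGroup (Imod k l) :=
  inferInstanceAs (AddCommGroup
    (∀ i : Fin l.len, Polynomial k ⧸ Ideal.span {(Polynomial.X : Polynomial k) ^ l.parts (i : ℕ)}))

noncomputable instance (k : Type*) [Field k] (l : Ptn) : Module (Polynomial k) (Imod k l) :=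
  inferInstanceAs (Module (Polynomial k)
    (∀ i : Fin l.len, Polynomial k ⧸ Ideal.span {(Polynomial.X : Polynomial k) ^ l.parts (i : ℕ)}))

/-- The Hall number `g^λ_{μ,ν}`: the number of `k[X]`-submodules `N ⊆ I_λ` with
`N ≅ I_ν` and `I_λ/N ≅ I_μ`. -/
noncomputable def hallNum (k : Type*) [Field k] (l m n : Ptn) : ℕ :=
  Nat.card {N : Submodule (Polynomial k) (Imod k l) //
    Nonempty ((↥N) ≃ₗ[Polynomial k] Imod k n) ∧
    Nonempty ((Imod k l ⧸ N) ≃ₗ[Polynomial k] Imod k m)}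

/-- `a_λ`, the number of `k[X]`-module automorphisms of `I_λ`. -/
noncomputable def aut (k : Type*) [Field k] (l : Ptn) : ℕ :=
  Nat.card (Imod k l ≃ₗ[Polynomial k] Imod k l)

/-!
Pascal's rule `[n+1, v+1] = [n, v+1] + t^(n-v) [n, v]` gives
`S(n+1) = S(n) + Σ_{v ≤ n} t^(n-v) [n, v] (t;t)_v` for `S(n) = Σ_{v < n} [n, v+1] (t;t)_v`.
The new sum is `(t;t)_n Σ_{j ≤ n} t^j / (t;t)_j`, and `Σ_{j ≤ n} t^j / (t;t)_j = 1 / (t;t)_n`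
telescopes, since `1 / (t;t)_{j+1} - 1 / (t;t)_j = t^(j+1) / (t;t)_{j+1}`.
-/

lemma qPoch_succ {R : Type*} [CommRing R] (x s : R) (m : ℕ) :
    qPoch x s (m + 1) = qPoch x s m * (1 - x * s ^ m) :=
  Finset.prod_range_succ _ _

lemma qPoch_zero {R : Type*} [CommRing R] (x s : R) : qPoch x s 0 = 1 :=
  Finset.prod_range_zero _

section QBinom

variable {K : Type*} [Field K] {t : K}

lemma one_sub_mul_pow_ne_zero (hP : ∀ m, qPoch t t m ≠ 0) (m : ℕ) : 1 - t * t ^ m ≠ 0 :=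
  right_ne_zero_of_mul (qPoch_succ t t m ▸ hP (m + 1))

lemma qBinom_mul_qPoch {n v : ℕ} (hv : v ≤ n) (hP : ∀ m, qPoch t t m ≠ 0) :
    qBinom t n v * qPoch t t v = qPoch t t n / qPoch t t (n - v) := by
  rw [qBinom, if_pos hv]
  field_simp [hP v, hP (n - v)]

lemma qBinom_succ_succ (hP : ∀ m, qPoch t t m ≠ 0) (n v : ℕ) :
    qBinom t (n + 1) (v + 1) = qBinom t n (v + 1) + t ^ (n - v) * qBinom t n v := by
  rcases lt_trichotomy v n with hvn | rfl | hnv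
  · obtain ⟨j, rfl⟩ : ∃ j, n = v + 1 + j := ⟨n - (v + 1), by omega⟩
    simp only [qBinom, if_pos (by omega : v + 1 ≤ v + 1 + j + 1),
      if_pos (by omega : v + 1 ≤ v + 1 + j), if_pos (by omega : v ≤ v + 1 + j),
      show v + 1 + j + 1 - (v + 1) = j + 1 by omega, show v + 1 + j - (v + 1) = j by omega,
      show v + 1 + j - v = j + 1 by omega, qPoch_succ t t (v + 1 + j), qPoch_succ t t j,
      qPoch_succ t t v]
    have := one_sub_mul_pow_ne_zero hP
    field_simp [hP (v + 1 + j), hP v, hP j, this (v + 1 + j), this j, this v]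
    ring
  · simp [qBinom, qPoch_zero, div_self (hP _)]
  · simp [qBinom, show ¬ v + 1 ≤ n by omega, show ¬ v ≤ n by omega]

lemma sum_pow_div_qPoch (hP : ∀ m, qPoch t t m ≠ 0) (m : ℕ) :
    ∑ j ∈ Finset.range (m + 1), t ^ j / qPoch t t j = 1 / qPoch t t m := by
  induction m with
  | zero => simp [qPoch_zero]
  | succ m ih =>
    rw [Finset.sum_range_succ, ih, qPoch_succ]
    field_simp [hP m, one_sub_mul_pow_ne_zero hP m]
    ring

lemma sum_pow_mul_qBinom_mul_qPoch (hP : ∀ m, qPoch t t m ≠ 0) (n : ℕ) :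
    ∑ v ∈ Finset.range (n + 1), t ^ (n - v) * qBinom t n v * qPoch t t v = 1 :=
  calc ∑ v ∈ Finset.range (n + 1), t ^ (n - v) * qBinom t n v * qPoch t t v
      = ∑ v ∈ Finset.range (n + 1), qPoch t t n * (t ^ (n - v) / qPoch t t (n - v)) := by
        refine Finset.sum_congr rfl fun v hv => ?_
        rw [mul_assoc, qBinom_mul_qPoch (Finset.mem_range_succ_iff.1 hv) hP]
        ring
    _ = qPoch t t n * ∑ j ∈ Finset.range (n + 1), t ^ j / qPoch t t j := by
        rw [← Finset.mul_sum, ← Finset.sum_range_reflect (fun j => t ^ j / qPoch t t j)]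
        simp
    _ = 1 := by rw [sum_pow_div_qPoch hP]; field_simp [hP n]

lemma sum_qBinom_succ_mul_qPoch (hP : ∀ m, qPoch t t m ≠ 0) (n : ℕ) :
    ∑ v ∈ Finset.range n, qBinom t n (v + 1) * qPoch t t v = n := by
  induction n with
  | zero => simp
  | succ n ih =>
    have hlast : qBinom t n (n + 1) = 0 := by simp [qBinom]
    simp only [qBinom_succ_succ hP, add_mul, Finset.sum_add_distrib, sum_pow_mul_qBinom_mul_qPoch hP]
    rw [Finset.sum_range_succ, ih, hlast]
    push_cast
    ring

end QBinom

lemma qPoch_X_ne_zero (K : Type*) [Field K] (m : ℕ) :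
    qPoch (RatFunc.X : RatFunc K) RatFunc.X m ≠ 0 := by
  refine Finset.prod_ne_zero_iff.2 fun i _ => ?_
  have h : (1 - RatFunc.X * RatFunc.X ^ i : RatFunc K)
      = -algebraMap (Polynomial K) (RatFunc K) (Polynomial.X ^ (i + 1) - Polynomial.C 1) := by
    simp [RatFunc.algebraMap_X, pow_succ']
  rw [h, neg_ne_zero, ne_eq, map_eq_zero_iff _ (RatFunc.algebraMap_injective K)]
  exact Polynomial.X_pow_sub_C_ne_zero i.succ_pos 1

theorem qbinom_sum_identity_general (n : ℕ) :
    ∑ u ∈ Finset.Icc 1 n,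
        qBinom (RatFunc.X : RatFunc ℚ) n u *
          qPoch (RatFunc.X : RatFunc ℚ) (RatFunc.X : RatFunc ℚ) (u - 1)
      = (n : RatFunc ℚ) := by
  rw [← Finset.Ico_add_one_right_eq_Icc, Finset.sum_Ico_eq_sum_range,
    ← sum_qBinom_succ_mul_qPoch (qPoch_X_ne_zero ℚ) n]
  simp [add_comm]

/-- for every `n ≥ 1`, `Σ_{u=1}^{n} [n choose u]_t · (t;t)_{u−1} = n`
(an identity of polynomials in `t`, stated in the field `ℚ(t)` of rational functions,
in which `ℤ[t]` embeds). -/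
theorem qbinom_sum_identity (n : ℕ) (hn : 1 ≤ n) :
    ∑ u ∈ Finset.Icc 1 n,
        qBinom (RatFunc.X : RatFunc ℚ) n u *
          qPoch (RatFunc.X : RatFunc ℚ) (RatFunc.X : RatFunc ℚ) (u - 1)
      = (n : RatFunc ℚ) :=
  qbinom_sum_identity_general n
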